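/- Let G be a finite non-abelian p-group. If the group C* of central automorphisms fixing Z(G) elementwise equals Inn(G), then G is nilpotent of class 2 and Z(G) is cyclic. -/

import Mathlib

/-!
Since `Inn(G) ≤ C*`, every commutator is central, so `G` has class 2 and the exponent of
`G/Z` divides that of `Z = Z(G)`. Every homomorphism `f : G/Z → Z` yields the automorphism
`g ↦ g f(gZ)`, which lies in `C*`; hence `|Hom(G/Z, Z)| ≤ |C*| = |Inn(G)| = |G/Z|`.
If `Z` were not cyclic, it would contain `C_m × C_n` with `exp Z ∣ m` and `p ∣ n`. By duality
`|Hom(G/Z, C_m)| = |G/Z|`, and `Hom(G/Z, C_n)` is nontrivial because `G/Z` has the nontrivial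
quotient `(G/Z)/(G/Z)^p` of exponent `p`; so `|Hom(G/Z, Z)| > |G/Z|`, a contradiction.
-/

open Subgroup Function
open scoped IsMulCommutative commutatorElement

theorem Nat.card_multiplicative_zmod (n : ℕ) : Nat.card (Multiplicative (ZMod n)) = n := by
  rw [Nat.card_congr Multiplicative.toAdd, Nat.card_zmod]

section Duality

variable {A B C D : Type*}

theorem IsCyclic.hasEnoughRootsOfUnity_of_dvd [CommGroup C] [IsCyclic C] [Finite C]
    {n : ℕ} (hn : n ∣ Nat.card C) : HasEnoughRootsOfUnity C n := by
  obtain ⟨g, hg⟩ := IsCyclic.exists_ofOrder_eq_natCard (α := C)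
  have : HasEnoughRootsOfUnity C (Nat.card C) :=
    { prim := ⟨g, hg ▸ IsPrimitiveRoot.orderOf g⟩
      cyc := by
        have : IsCyclic Cˣ := isCyclic_of_surjective toUnits.toMonoidHom toUnits.surjective
        infer_instance }
  exact HasEnoughRootsOfUnity.of_dvd C hn

theorem card_monoidHom_of_isCyclic [CommGroup A] [Finite A] [CommGroup C] [IsCyclic C] [Finite C]
    (h : Monoid.exponent A ∣ Nat.card C) : Nat.card (A →* C) = Nat.card A := by
  have := IsCyclic.hasEnoughRootsOfUnity_of_dvd h
  rw [← CommGroup.card_monoidHom_of_hasEnoughRootsOfUnity A C]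
  exact Nat.card_congr (MulEquiv.monoidHomCongrRight toUnits).toEquiv

theorem card_monoidHom_le_of_surjective [MulOneClass A] [MulOneClass B] [MulOneClass C]
    [Finite (A →* C)] (π : A →* B) (hπ : Surjective π) : Nat.card (B →* C) ≤ Nat.card (A →* C) :=
  Nat.card_le_card_of_injective (fun φ => φ.comp π) fun _ _ h => (MonoidHom.cancel_right hπ).mp h

theorem card_mul_card_monoidHom_le [MulOneClass A] [MulOneClass B] [MulOneClass C]
    [MulOneClass D] [Finite (A →* B)] (f : C × D →* B) (hf : Injective f) :
    Nat.card (A →* C) * Nat.card (A →* D) ≤ Nat.card (A →* B) := by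
  rw [← Nat.card_prod]
  refine Nat.card_le_card_of_injective (fun φψ => f.comp (φψ.1.prod φψ.2)) ?_
  rintro ⟨φ, ψ⟩ ⟨φ', ψ'⟩ h
  have h' := (MonoidHom.cancel_left hf).mp h
  exact Prod.ext (congrArg ((MonoidHom.fst C D).comp ·) h')
    (congrArg ((MonoidHom.snd C D).comp ·) h')

end Duality

section PGroup

variable {p : ℕ} [hp : Fact p.Prime]

theorem IsPGroup.powMonoidHom_range_ne_top {A : Type*} [CommGroup A] [Finite A] [Nontrivial A]
    (hA : IsPGroup p A) : (powMonoidHom p : A →* A).range ≠ ⊤ := by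
  obtain ⟨n, hn, hcard⟩ := hA.nontrivial_iff_card.mp ‹_›
  obtain ⟨x, hx⟩ := exists_prime_orderOf_dvd_card' (G := A) p (hcard ▸ dvd_pow_self p hn.ne')
  have hx₁ : x ≠ 1 := fun h => hp.out.ne_one (by rw [← hx, h, orderOf_one])
  have hxp : powMonoidHom p x = powMonoidHom p 1 := by simp [← hx, pow_orderOf_eq_one]
  rw [Ne, MonoidHom.range_eq_top, ← Finite.injective_iff_surjective]
  exact fun hinj => hx₁ (hinj hxp)

theorem IsPGroup.one_lt_card_monoidHom {A C : Type*} [CommGroup A] [Finite A] [Nontrivial A]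
    [CommGroup C] [IsCyclic C] [Finite C] (hA : IsPGroup p A) (hC : p ∣ Nat.card C) :
    1 < Nat.card (A →* C) := by
  let Q := A ⧸ (powMonoidHom p : A →* A).range
  have : Nontrivial Q := QuotientGroup.nontrivial_iff.mpr hA.powMonoidHom_range_ne_top
  have hexp : Monoid.exponent Q ∣ Nat.card C := by
    refine dvd_trans (Monoid.exponent_dvd_of_forall_pow_eq_one fun q => ?_) hC
    induction q using QuotientGroup.induction_on with
    | H a => exact (QuotientGroup.eq_one_iff _).mpr ⟨a, rfl⟩
  have : Finite (A →* C) := FunLike.finite _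
  calc 1 < Nat.card Q := Finite.one_lt_card
    _ = Nat.card (Q →* C) := (card_monoidHom_of_isCyclic hexp).symm
    _ ≤ Nat.card (A →* C) :=
      card_monoidHom_le_of_surjective (QuotientGroup.mk' _) (QuotientGroup.mk'_surjective _)

theorem IsPGroup.exists_injective_zmod_prod {B : Type*} [CommGroup B] [Finite B]
    (hB : IsPGroup p B) (hcyc : ¬ IsCyclic B) : ∃ m n : ℕ, Monoid.exponent B ∣ m ∧ p ∣ n ∧
      ∃ f : Multiplicative (ZMod m) × Multiplicative (ZMod n) →* B, Injective f := by
  classical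
  obtain ⟨κ, _, m, hm, ⟨e⟩⟩ := CommGroup.equiv_prod_multiplicative_zmod_of_finite B
  let ι (j : κ) : Multiplicative (ZMod (m j)) →* B := e.symm.toMonoidHom.comp
    (MonoidHom.mulSingle (fun j => Multiplicative (ZMod (m j))) j)
  have hι (j : κ) : Injective (ι j) := fun _ _ h => Pi.mulSingle_injective j (e.symm.injective h)
  have hpow (j : κ) : ∃ k, m j = p ^ k := by
    have : Finite (Multiplicative (ZMod (m j))) := Finite.of_injective _ (hι j)
    obtain ⟨k, hk⟩ := IsPGroup.iff_card.mp (hB.of_injective _ (hι j))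
    exact ⟨k, by rw [← hk, Nat.card_multiplicative_zmod]⟩
  choose k hk using hpow
  have : Nonempty κ := by
    by_contra h
    have : Subsingleton B := e.toEquiv.subsingleton_congr.mpr (by
      rw [not_nonempty_iff] at h; infer_instance)
    exact hcyc isCyclic_of_subsingleton
  obtain ⟨j₀, hj₀⟩ := Finite.exists_max k
  obtain ⟨j₁, hj₁⟩ : ∃ j₁, j₁ ≠ j₀ := by
    by_contra! h
    refine hcyc (isCyclic_of_surjective (ι j₀) fun b => ⟨e b j₀, e.injective ?_⟩)
    ext j
    obtain rfl := h j
    simp [ι]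
  refine ⟨m j₀, m j₁, Monoid.exponent_dvd_of_forall_pow_eq_one fun b => e.injective ?_, ?_,
    (ι j₀).coprod (ι j₁), ?_⟩
  · ext j
    obtain ⟨c, hc⟩ : m j ∣ m j₀ := by rw [hk, hk]; exact pow_dvd_pow p (hj₀ j)
    have h₁ : e b j ^ m j = 1 := by
      simpa only [Nat.card_multiplicative_zmod] using pow_card_eq_one' (x := e b j)
    rw [map_pow, Pi.pow_apply, map_one, Pi.one_apply, hc, pow_mul, h₁, one_pow]
  · have hk₁ : k j₁ ≠ 0 := fun h => by simpa [hk, h] using hm j₁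
    rw [hk j₁]
    exact dvd_pow_self p hk₁
  · rintro ⟨x₀, x₁⟩ ⟨y₀, y₁⟩ h
    have h' := congrArg e h
    simp only [MonoidHom.coprod_apply, map_mul, ι] at h'
    have h₀ := congrFun h' j₀
    have h₁ := congrFun h' j₁
    simp [hj₁, hj₁.symm] at h₀ h₁
    simp [h₀, h₁]

theorem card_lt_card_monoidHom_of_not_isCyclic {A B : Type*} [CommGroup A] [Finite A]
    [Nontrivial A] [CommGroup B] [Finite B] (hA : IsPGroup p A) (hB : IsPGroup p B)
    (hcyc : ¬ IsCyclic B) (hexp : Monoid.exponent A ∣ Monoid.exponent B) :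
    Nat.card A < Nat.card (A →* B) := by
  obtain ⟨m, n, hm, hn, f, hf⟩ := hB.exists_injective_zmod_prod hcyc
  have : Finite (Multiplicative (ZMod m)) :=
    Finite.of_injective _ (hf.comp (Prod.mk_left_injective 1))
  have : Finite (Multiplicative (ZMod n)) :=
    Finite.of_injective _ (hf.comp (Prod.mk_right_injective 1))
  have : Finite (A →* B) := FunLike.finite _
  calc Nat.card A < Nat.card A * Nat.card (A →* Multiplicative (ZMod n)) :=
        lt_mul_of_one_lt_right Nat.card_pos
          (hA.one_lt_card_monoidHom (by rwa [Nat.card_multiplicative_zmod]))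
    _ = Nat.card (A →* Multiplicative (ZMod m)) * Nat.card (A →* Multiplicative (ZMod n)) := by
        rw [card_monoidHom_of_isCyclic (C := Multiplicative (ZMod m))
          (by rw [Nat.card_multiplicative_zmod]; exact hexp.trans hm)]
    _ ≤ Nat.card (A →* B) := card_mul_card_monoidHom_le f hf

end PGroup

section Center

variable {G : Type*} [Group G]

theorem MulAut.ker_conj : (MulAut.conj : G →* MulAut G).ker = center G := by
  ext g
  simp only [MonoidHom.mem_ker, MulEquiv.ext_iff, MulAut.conj_apply, MulAut.one_apply,
    mem_center_iff, mul_inv_eq_iff_eq_mul]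
  exact forall_congr' fun _ => eq_comm

theorem MulAut.card_range_conj :
    Nat.card (MulAut.conj : G →* MulAut G).range = Nat.card (G ⧸ center G) :=
  Nat.card_congr ((QuotientGroup.quotientMulEquivOfEq MulAut.ker_conj.symm).trans
    (QuotientGroup.quotientKerEquivRange _)).toEquiv.symm

theorem exponent_quotient_center_dvd (hG : commutator G ≤ center G) :
    Monoid.exponent (G ⧸ center G) ∣ Monoid.exponent (center G) := by
  refine Monoid.exponent_dvd_of_forall_pow_eq_one fun q => ?_
  induction q using QuotientGroup.induction_on with | H g => ?_
  rw [← QuotientGroup.mk_pow, QuotientGroup.eq_one_iff, mem_center_iff]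
  intro x
  have hc : ⁅g⁻¹, x⁆ ∈ center G := hG (commutator_mem_commutator (mem_top _) (mem_top _))
  have hcn : ⁅g⁻¹, x⁆ ^ Monoid.exponent (center G) = 1 :=
    congrArg Subtype.val (Monoid.pow_exponent_eq_one (⟨_, hc⟩ : center G))
  have hconj : x * g * x⁻¹ = g * ⁅g⁻¹, x⁆ := by rw [commutatorElement_def]; group
  rw [← mul_inv_eq_iff_eq_mul, ← conj_pow, hconj,
    Commute.mul_pow (mem_center_iff.mp hc g), hcn, mul_one]

def MulAut.ofQuotientCenterHom (f : G ⧸ center G →* center G) : MulAut G where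
  toFun g := g * f g
  invFun g := g * (f g)⁻¹
  left_inv g := by simp [QuotientGroup.mk_mul_of_mem _ (f g).2]
  right_inv g := by simp [QuotientGroup.mk_mul_of_mem _ (inv_mem (f g).2)]
  map_mul' x y := by
    simp only [QuotientGroup.mk_mul, map_mul, Subgroup.coe_mul]
    rw [mul_assoc x, ← mul_assoc y, mem_center_iff.mp (f x).2 y]
    group

@[simp]
theorem MulAut.ofQuotientCenterHom_apply (f : G ⧸ center G →* center G) (g : G) :
    MulAut.ofQuotientCenterHom f g = g * f g :=
  rfl

theorem MulAut.ofQuotientCenterHom_apply_of_mem_center (f : G ⧸ center G →* center G) {z : G}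
    (hz : z ∈ center G) : MulAut.ofQuotientCenterHom f z = z := by
  simp [(QuotientGroup.eq_one_iff z).mpr hz]

theorem MulAut.ofQuotientCenterHom_injective :
    Injective (MulAut.ofQuotientCenterHom : (G ⧸ center G →* center G) → MulAut G) := by
  intro f f' h
  refine QuotientGroup.monoidHom_ext _ (MonoidHom.ext fun g => Subtype.ext ?_)
  simpa using DFunLike.congr_fun h g

end Center

/-- Let `G` be a finite non-abelian `p`-group.  If the group `C*` of central automorphisms
fixing `Z(G)` elementwise equals `Inn(G)`, then `G` is nilpotent of class 2 and `Z(G)` is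
cyclic. -/
theorem stmt_16 (p : ℕ) [Fact p.Prime] (G : Type*) [Group G] [Finite G]
    (hp : IsPGroup p G) (hnab : ∃ a b : G, a * b ≠ b * a)
    (Cstar : Subgroup (MulAut G))
    (hC : ∀ α : MulAut G, α ∈ Cstar ↔
      (∀ g : G, g⁻¹ * α g ∈ Subgroup.center G) ∧ ∀ z ∈ Subgroup.center G, α z = z)
    (heq : Cstar = (MulAut.conj : G →* MulAut G).range) :
    commutator G ≤ Subgroup.center G ∧ IsCyclic (Subgroup.center G) := by
  have hclass2 : commutator G ≤ center G := by
    rw [commutator_def, commutator_le]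
    rintro g - h -
    have hinner := ((hC (MulAut.conj h)).mp (heq ▸ ⟨h, rfl⟩)).1 g⁻¹
    rwa [MulAut.conj_apply, inv_inv, ← mul_assoc, ← mul_assoc, ← commutatorElement_def] at hinner
  refine ⟨hclass2, by_contra fun hcyc => ?_⟩
  have : IsMulCommutative (G ⧸ center G) :=
    Normal.quotient_commutative_iff_commutator_le.mpr hclass2
  have : Nontrivial (G ⧸ center G) := by
    obtain ⟨a, b, hab⟩ := hnab
    exact QuotientGroup.nontrivial_iff.mpr fun h => hab (mem_center_iff.mp (h ▸ mem_top a) b).symm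
  have hlt := card_lt_card_monoidHom_of_not_isCyclic (hp.to_quotient _) (hp.to_subgroup _) hcyc
    (exponent_quotient_center_dvd hclass2)
  have : Finite (MulAut G) := FunLike.finite _
  have hle : Nat.card (G ⧸ center G →* center G) ≤ Nat.card Cstar :=
    Nat.card_le_card_of_injective (fun f => ⟨MulAut.ofQuotientCenterHom f, (hC _).mpr
      ⟨fun g => by simp, fun _ => MulAut.ofQuotientCenterHom_apply_of_mem_center f⟩⟩)
      fun _ _ h => MulAut.ofQuotientCenterHom_injective (congrArg Subtype.val h)
  rw [heq, MulAut.card_range_conj] at hle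
  omega
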